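/- Let G be a group and k ≥ 1. For σ ∈ A_G(k), the assignment x mod Γ_G(2) ↦ s_σ(x) mod Γ_G(k+2) is a well-defined homomorphism of abelian groups τ̃_k(σ) : G^ab → gr^{k+1}(L_G) (independent of the chosen representative x), the resulting map τ̃_k : A_G(k) → Hom(G^ab, gr^{k+1}(L_G)) is a group homomorphism, and its kernel is exactly A_G(k+1); consequently τ̃_k induces an injective homomorphism τ_k : A_G(k)/A_G(k+1) → Hom(G^ab, gr^{k+1}(L_G)). -/

import Mathlib

/-!
STATEMENT 5: Let G be a group and k ≥ 1. For σ ∈ A_G(k), the assignment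
x mod Γ_G(2) ↦ s_σ(x) mod Γ_G(k+2) is a well-defined homomorphism of abelian groups
τ̃_k(σ) : G^ab → gr^{k+1}(L_G), the resulting map
τ̃_k : A_G(k) → Hom(G^ab, gr^{k+1}(L_G)) is a group homomorphism, and its kernel is
exactly A_G(k+1); consequently τ̃_k induces an injective homomorphism
τ_k : A_G(k)/A_G(k+1) → Hom(G^ab, gr^{k+1}(L_G)).

Here `Γ_G(m) = lowerCentralSeries G (m-1)`, `s_σ(x) = x⁻¹ * σ x`, and equalities of cosets
mod `Γ_G(k+2) = lowerCentralSeries G (k+1)` are expressed in `G ⧸ lowerCentralSeries G (k+1)`.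
The five conjuncts say: (0) s_σ(x) lies in Γ_G(k+1), so its class lives in gr^{k+1};
(1) well-definedness: x ≡ y mod Γ_G(2) implies s_σ(x) ≡ s_σ(y) mod Γ_G(k+2);
(2) τ̃_k(σ) is a homomorphism; (3) τ̃_k is a homomorphism on A_G(k);
(4) the kernel of τ̃_k is exactly A_G(k+1) (whence τ_k is injective).
-/
noncomputable section

/-- For a subgroup `N` of `G`, the subgroup of automorphisms `σ` with `x⁻¹ · x^σ ∈ N`
for all `x`. -/
def fixFiltration {G : Type*} [Group G] (N : Subgroup G) : Subgroup (MulAut G) where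
  carrier := {σ | ∀ x : G, x⁻¹ * σ x ∈ N}
  one_mem' := by intro x; simpa using N.one_mem
  mul_mem' := by
    intro σ τ hσ hτ x
    have h3 : σ (x⁻¹ * τ x) ∈ N := by
      have h4 : σ (x⁻¹ * τ x) =
          (x⁻¹ * τ x) * ((x⁻¹ * τ x)⁻¹ * σ (x⁻¹ * τ x)) := by group
      rw [h4]
      exact N.mul_mem (hτ x) (hσ _)
    have h5 : x⁻¹ * (σ * τ) x = (x⁻¹ * σ x) * σ (x⁻¹ * τ x) := by
      rw [MulAut.mul_apply, map_mul, map_inv]; group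
    rw [h5]
    exact N.mul_mem (hσ x) h3
  inv_mem' := by
    intro σ hσ x
    have h := hσ (σ⁻¹ x)
    rw [MulAut.apply_inv_self] at h
    simpa [mul_inv_rev] using N.inv_mem h

/-- The Andreadakis–Johnson filtration: `johnsonFiltration G k = 𝒜_G(k)`, the kernel of
`Aut G → Aut (G/Γ_G(k+1))`, where `Γ_G(k+1) = lowerCentralSeries G k`. -/
def johnsonFiltration (G : Type*) [Group G] (k : ℕ) : Subgroup (MulAut G) :=
  fixFiltration (Subgroup.lowerCentralSeries (⊤ : Subgroup G) k)

theorem mem_johnsonFiltration {G : Type*} [Group G] {k : ℕ} {σ : MulAut G} :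
    σ ∈ johnsonFiltration G k ↔ ∀ x : G, x⁻¹ * σ x ∈ Subgroup.lowerCentralSeries (⊤ : Subgroup G) k :=
  Iff.rfl


/-- `s_σ(x) = x⁻¹ · x^σ`. -/
def sAct {G : Type*} [Group G] (σ : MulAut G) (x : G) : G := x⁻¹ * σ x


/-! Modulo `Γ(k+2)` the elements of `Γ(k+1)` are central, so the cocycle identity
`s_σ(xy) = y⁻¹ s_σ(x) y · s_σ(y)` makes `x ↦ s_σ(x) mod Γ(k+2)` a homomorphism with central,
hence abelian, image. It therefore kills `[G, G]`, that is, `σ` acts trivially on `[G, G]`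
modulo `Γ(k+2)`; this is what turns `s_{στ}(x) = s_σ(x) · σ(s_τ(x))` into the additivity of `τ̃_k`. -/

section FilteredQuotient

variable {G : Type*} [Group G] {M N : Subgroup G} [N.Normal]

theorem mk_commute_of_commutator_le (hMN : ⁅M, ⊤⁆ ≤ N) {c : G} (hc : c ∈ M) (q : G ⧸ N) :
    Commute (c : G ⧸ N) q := by
  induction q using QuotientGroup.induction_on with
  | H g =>
    have hmk := map_commutatorElement (QuotientGroup.mk' N) c g
    rw [QuotientGroup.mk'_apply, QuotientGroup.mk'_apply, QuotientGroup.mk'_apply] at hmk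
    rw [← commutatorElement_eq_one_iff_commute, ← hmk, QuotientGroup.eq_one_iff]
    exact hMN (Subgroup.commutator_mem_commutator hc (Subgroup.mem_top g))

theorem mk_sAct_mul (hMN : ⁅M, ⊤⁆ ≤ N) {σ : MulAut G} (hσ : σ ∈ fixFiltration M) (x y : G) :
    ((sAct σ (x * y) : G) : G ⧸ N) = sAct σ x * sAct σ y := by
  have hcocycle : sAct σ (x * y) = y⁻¹ * sAct σ x * y * sAct σ y := by
    simp only [sAct, map_mul, mul_inv_rev]
    group
  rw [hcocycle, QuotientGroup.mk_mul, QuotientGroup.mk_mul, QuotientGroup.mk_mul,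
    QuotientGroup.mk_inv, mul_assoc _ _ (y : G ⧸ N),
    (mk_commute_of_commutator_le (c := sAct σ x) hMN (hσ x) (y : G ⧸ N)).eq, inv_mul_cancel_left]

/-- The homomorphism `x ↦ s_σ(x) mod N`; for `M = Γ(k+1)`, `N = Γ(k+2)` it is `τ̃_k(σ)`
before passing to `G^ab`. -/
def sActHom (hMN : ⁅M, ⊤⁆ ≤ N) {σ : MulAut G} (hσ : σ ∈ fixFiltration M) : G →* G ⧸ N :=
  MonoidHom.mk' (fun x => ((sAct σ x : G) : G ⧸ N)) (mk_sAct_mul hMN hσ)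

theorem sActHom_apply (hMN : ⁅M, ⊤⁆ ≤ N) {σ : MulAut G} (hσ : σ ∈ fixFiltration M) (x : G) :
    sActHom hMN hσ x = ((sAct σ x : G) : G ⧸ N) :=
  rfl

theorem commutator_le_ker_sActHom (hMN : ⁅M, ⊤⁆ ≤ N) {σ : MulAut G}
    (hσ : σ ∈ fixFiltration M) : commutator G ≤ (sActHom hMN hσ).ker := by
  rw [commutator_def, Subgroup.commutator_le]
  intro a _ b _
  rw [MonoidHom.mem_ker, map_commutatorElement, commutatorElement_eq_one_iff_commute,
    sActHom_apply]
  exact mk_commute_of_commutator_le (c := sAct σ a) hMN (hσ a) _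

theorem mk_sAct_eq_of_inv_mul_mem_commutator (hMN : ⁅M, ⊤⁆ ≤ N) {σ : MulAut G}
    (hσ : σ ∈ fixFiltration M) {x y : G} (hxy : x⁻¹ * y ∈ commutator G) :
    ((sAct σ x : G) : G ⧸ N) = (sAct σ y : G) := by
  rw [← sActHom_apply hMN hσ, ← sActHom_apply hMN hσ]
  exact ((MonoidHom.eq_iff _).2 (commutator_le_ker_sActHom hMN hσ hxy)).symm

theorem mk_apply_eq_of_mem_commutator (hMN : ⁅M, ⊤⁆ ≤ N) {σ : MulAut G}
    (hσ : σ ∈ fixFiltration M) {x : G} (hx : x ∈ commutator G) : (σ x : G ⧸ N) = x := by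
  have hfix := MonoidHom.mem_ker.1 (commutator_le_ker_sActHom hMN hσ hx)
  rw [sActHom_apply, QuotientGroup.eq_one_iff] at hfix
  exact (QuotientGroup.eq.2 hfix).symm

theorem mk_sAct_aut_mul (hMN : ⁅M, ⊤⁆ ≤ N) {σ τ : MulAut G} (hσ : σ ∈ fixFiltration M)
    (hτ : τ ∈ fixFiltration (commutator G)) (x : G) :
    ((sAct (σ * τ) x : G) : G ⧸ N) = sAct σ x * sAct τ x := by
  have hcomp : sAct (σ * τ) x = sAct σ x * σ (sAct τ x) := by
    simp only [sAct, MulAut.mul_apply, map_mul, map_inv]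
    group
  rw [hcomp, QuotientGroup.mk_mul, mk_apply_eq_of_mem_commutator (x := sAct τ x) hMN hσ (hτ x)]

end FilteredQuotient

theorem statement5 {G : Type*} [Group G] (k : ℕ) (hk : 1 ≤ k) (σ : MulAut G)
    (hσ : σ ∈ johnsonFiltration G k) :
    (∀ x : G, sAct σ x ∈ Subgroup.lowerCentralSeries (⊤ : Subgroup G) k) ∧
    (∀ x y : G, x⁻¹ * y ∈ Subgroup.lowerCentralSeries (⊤ : Subgroup G) 1 →
      (QuotientGroup.mk (sAct σ x) : G ⧸ Subgroup.lowerCentralSeries (⊤ : Subgroup G) (k + 1)) =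
        QuotientGroup.mk (sAct σ y)) ∧
    (∀ x y : G,
      (QuotientGroup.mk (sAct σ (x * y)) : G ⧸ Subgroup.lowerCentralSeries (⊤ : Subgroup G) (k + 1)) =
        QuotientGroup.mk (sAct σ x) * QuotientGroup.mk (sAct σ y)) ∧
    (∀ τ : MulAut G, τ ∈ johnsonFiltration G k → ∀ x : G,
      (QuotientGroup.mk (sAct (σ * τ) x) : G ⧸ Subgroup.lowerCentralSeries (⊤ : Subgroup G) (k + 1)) =
        QuotientGroup.mk (sAct σ x) * QuotientGroup.mk (sAct τ x)) ∧
    ((∀ x : G, sAct σ x ∈ Subgroup.lowerCentralSeries (⊤ : Subgroup G) (k + 1)) ↔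
      σ ∈ johnsonFiltration G (k + 1)) := by
  have hΓ : ⁅Subgroup.lowerCentralSeries (⊤ : Subgroup G) k, ⊤⁆ ≤
      Subgroup.lowerCentralSeries (⊤ : Subgroup G) (k + 1) := le_rfl
  have hΓ₁ := Subgroup.top_lowerCentralSeries_one (G := G)
  refine ⟨hσ, fun x y hxy => ?_, mk_sAct_mul hΓ hσ, fun τ hτ => mk_sAct_aut_mul hΓ hσ ?_, Iff.rfl⟩
  · exact mk_sAct_eq_of_inv_mul_mem_commutator hΓ hσ (hΓ₁ ▸ hxy)
  · intro x
    exact hΓ₁ ▸ Subgroup.lowerCentralSeries_antitone _ hk (hτ x)
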